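/- arXiv:2508.18340 — 3 statements merged into one kernel-verified Lean document; each statement's English description precedes it below -/
import Mathlib

section
/- Suppose 0 ≤ T ≤ ε' where ε' = 2ε/(1+ε) and ε ∈ (0,1). If (1-T)·L ≤ L_S ≤ L for some L > 0, then with α = sqrt((1-ε²)/(1-T)) the scaled quantity α·L_S satisfies (1-ε)·L ≤ α·L_S ≤ (1+ε)·L. -/
/-- With `ε ∈ (0,1)`, `ε' = 2ε/(1+ε)`, `T ∈ [0,ε']`, `L > 0`, and
`(1-T)·L ≤ L_S ≤ L`, the adaptive weight `α = √((1-ε²)/(1-T))` gives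
`(1-ε)·L ≤ α·L_S ≤ (1+ε)·L`. -/
theorem adaptive_weight_sandwich (ε T L LS : ℝ)
    (hε0 : 0 < ε) (hε1 : ε < 1)
    (hT0 : 0 ≤ T) (hT : T ≤ 2 * ε / (1 + ε))
    (hL : 0 < L)
    (hLS_lo : (1 - T) * L ≤ LS) (hLS_hi : LS ≤ L) :
    (1 - ε) * L ≤ Real.sqrt ((1 - ε ^ 2) / (1 - T)) * LS ∧
    Real.sqrt ((1 - ε ^ 2) / (1 - T)) * LS ≤ (1 + ε) * L := by
  have h1ε : (0:ℝ) < 1 + ε := by linarith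
  have hT' : T * (1 + ε) ≤ 2 * ε := by
    exact (le_div_iff₀ h1ε).mp hT
  have hTlt : 0 < 1 - T := by nlinarith
  have hnum : (0:ℝ) ≤ 1 - ε ^ 2 := by nlinarith
  set a := Real.sqrt ((1 - ε ^ 2) / (1 - T)) with ha
  have ha0 : 0 ≤ a := Real.sqrt_nonneg _
  have ha2 : a ^ 2 = (1 - ε ^ 2) / (1 - T) := by
    rw [ha, Real.sq_sqrt (div_nonneg hnum hTlt.le)]
  have ha2' : a ^ 2 * (1 - T) = 1 - ε ^ 2 := by
    rw [ha2]; field_simp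
  have hkey : 1 - T ≥ (1 - ε) / (1 + ε) := by
    rw [ge_iff_le, div_le_iff₀ h1ε]; nlinarith
  have hub : a ≤ 1 + ε := by nlinarith [sq_nonneg (a - (1 + ε))]
  have hlb : 1 - ε ≤ a * (1 - T) := by
    nlinarith [sq_nonneg (a * (1 - T) - (1 - ε)), mul_nonneg ha0 hTlt.le]
  constructor
  · calc (1 - ε) * L ≤ a * (1 - T) * L := by nlinarith
      _ ≤ a * LS := by nlinarith [mul_le_mul_of_nonneg_left hLS_lo ha0]
  · calc a * LS ≤ a * L := mul_le_mul_of_nonneg_left hLS_hi ha0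
      _ ≤ (1 + ε) * L := by nlinarith
end

section
/- The ADUWT algorithm outputs a (1±ε)-coreset: if U ⊆ [n] satisfies Σ_{i∈U} s̄_i ≤ 2ε/(1+ε) where each s̄_i is an upper bound on sensitivity s_i, S = [n]\U, and α = sqrt((1-ε²)/(1 - Σ_{i∈U} s̄_i)), then for all f ∈ F, (1-ε)·L(f;D) ≤ α·Σ_{i∈S} ℓ(f;z_i) ≤ (1+ε)·L(f;D). -/
/-- ADUWT guarantee: if losses are nonnegative, `s̄ i` upper-bounds the
sensitivity ratio of each point, `U` satisfies `∑_{i∈U} s̄ i ≤ 2ε/(1+ε)`,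
`S = [n] \ U`, and `α = √((1-ε²)/(1-∑_{i∈U} s̄ i))`, then for all `f`,
`(1-ε)·L f ≤ α·∑_{i∈S} ℓ f i ≤ (1+ε)·L f`. -/
theorem aduwt_coreset_guarantee {F : Type*} {n : ℕ}
    (ℓ : F → Fin n → ℝ) (hℓ : ∀ f i, 0 ≤ ℓ f i)
    (L : F → ℝ) (hL : ∀ f, L f = ∑ i, ℓ f i)
    (sbar : Fin n → ℝ) (hs0 : ∀ i, 0 ≤ sbar i)
    (hs : ∀ i f, 0 < L f → ℓ f i / L f ≤ sbar i)
    (ε : ℝ) (hε0 : 0 < ε) (hε1 : ε < 1)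
    (U : Finset (Fin n)) (hU : ∑ i ∈ U, sbar i ≤ 2 * ε / (1 + ε))
    (S : Finset (Fin n)) (hS : S = Uᶜ)
    (α : ℝ) (hα : α = Real.sqrt ((1 - ε ^ 2) / (1 - ∑ i ∈ U, sbar i))) :
    ∀ f : F,
      (1 - ε) * L f ≤ α * ∑ i ∈ S, ℓ f i ∧
      α * ∑ i ∈ S, ℓ f i ≤ (1 + ε) * L f := by
  set σ : ℝ := ∑ i ∈ U, sbar i with hσdef
  have hε1pos : (0:ℝ) < 1 + ε := by linarith
  have hσ0 : 0 ≤ σ := Finset.sum_nonneg fun i _ => hs0 i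
  have hUkey : σ * (1 + ε) ≤ 2 * ε := (le_div_iff₀ hε1pos).1 hU
  have hσ1 : σ < 1 := by nlinarith
  have h1σ : (0:ℝ) < 1 - σ := by linarith
  have hnum : (0:ℝ) ≤ (1 - ε ^ 2) / (1 - σ) := by
    apply div_nonneg <;> nlinarith
  have hα0 : 0 ≤ α := by rw [hα]; exact Real.sqrt_nonneg _
  have hα2 : α ^ 2 = (1 - ε ^ 2) / (1 - σ) := by rw [hα]; exact Real.sq_sqrt hnum
  have hα2' : α ^ 2 * (1 - σ) = 1 - ε ^ 2 := by
    rw [hα2]; field_simp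
  have h1 : (1 - ε ^ 2) ≤ (1 + ε) ^ 2 * (1 - σ) := by
    nlinarith [mul_le_mul_of_nonneg_left hUkey hε1pos.le]
  have hsq : α ^ 2 ≤ (1 + ε) ^ 2 := by nlinarith [hα2', h1, h1σ]
  have hαup : α ≤ 1 + ε := by nlinarith [hsq, hα0, hε1pos]
  have h2 : (1 - ε) ^ 2 ≤ (1 - ε ^ 2) * (1 - σ) := by
    nlinarith [mul_le_mul_of_nonneg_left hUkey (by linarith : (0:ℝ) ≤ 1 - ε)]
  have hβ2 : (α * (1 - σ)) ^ 2 = (1 - ε ^ 2) * (1 - σ) := by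
    rw [mul_pow, sq (1 - σ), ← mul_assoc, hα2']
  have hαlow : 1 - ε ≤ α * (1 - σ) := by
    nlinarith [hβ2, h2, mul_nonneg hα0 h1σ.le, (by linarith : (0:ℝ) ≤ 1 - ε)]
  intro f
  have hLnn : 0 ≤ L f := by rw [hL]; exact Finset.sum_nonneg fun i _ => hℓ f i
  have hsplit : (∑ i ∈ S, ℓ f i) + (∑ i ∈ U, ℓ f i) = L f := by
    rw [hS, hL]
    exact Finset.sum_compl_add_sum U (ℓ f)
  rcases eq_or_lt_of_le hLnn with h0 | hLpos
  · have hall : ∀ i ∈ Finset.univ, ℓ f i = 0 := by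
      have := (Finset.sum_eq_zero_iff_of_nonneg (fun i _ => hℓ f i)).1 (by rw [← hL, ← h0])
      exact this
    have hSz : (∑ i ∈ S, ℓ f i) = 0 :=
      Finset.sum_eq_zero fun i hi => hall i (Finset.mem_univ i)
    rw [hSz, ← h0]
    norm_num
  · have hUL : (∑ i ∈ U, ℓ f i) ≤ σ * L f := by
      calc (∑ i ∈ U, ℓ f i) ≤ ∑ i ∈ U, sbar i * L f := by
            apply Finset.sum_le_sum
            intro i _
            have := hs i f hLpos
            rw [div_le_iff₀ hLpos] at this
            exact this
        _ = σ * L f := by rw [← Finset.sum_mul]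
    have hSlow : (1 - σ) * L f ≤ ∑ i ∈ S, ℓ f i := by nlinarith
    have hSup : (∑ i ∈ S, ℓ f i) ≤ L f := by
      have : 0 ≤ ∑ i ∈ U, ℓ f i := Finset.sum_nonneg fun i _ => hℓ f i
      linarith
    constructor
    · calc (1 - ε) * L f ≤ (α * (1 - σ)) * L f :=
            mul_le_mul_of_nonneg_right hαlow hLnn
        _ = α * ((1 - σ) * L f) := by ring
        _ ≤ α * ∑ i ∈ S, ℓ f i := mul_le_mul_of_nonneg_left hSlow hα0
    · calc α * ∑ i ∈ S, ℓ f i ≤ α * L f := mul_le_mul_of_nonneg_left hSup hα0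
        _ ≤ (1 + ε) * L f := mul_le_mul_of_nonneg_right hαup hLnn
end

section
/- For any ε ∈ (0,1), let ε' = 2ε/(1+ε), and suppose (1-T_U)L ≤ L_S ≤ L with L > 0. Then, whenever T_U < ε', the adaptive weight α = sqrt((1-ε²)/(1-T_U)) achieves a worst-case multiplicative error max{1 - α(1-T_U), α - 1} strictly smaller than that of the oblivious weight α₀ = sqrt((1-ε²)/(1-ε')) = 1+ε. -/
/-- The adaptive weight strictly beats the oblivious weight: for `ε ∈ (0,1)`,
`ε' = 2ε/(1+ε)`, `T ∈ [0, ε')`, with worst-case multiplicative error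
`g(α) = max{1 - α(1-T), α - 1}`, we have
`g(√((1-ε²)/(1-T))) < g(1+ε)`. -/
theorem adaptive_beats_oblivious (ε T : ℝ)
    (hε0 : 0 < ε) (hε1 : ε < 1)
    (hT0 : 0 ≤ T) (hT : T < 2 * ε / (1 + ε)) :
    max (1 - Real.sqrt ((1 - ε ^ 2) / (1 - T)) * (1 - T))
        (Real.sqrt ((1 - ε ^ 2) / (1 - T)) - 1) <
      max (1 - (1 + ε) * (1 - T)) ((1 + ε) - 1) := by
  have h1ε : (0:ℝ) < 1 + ε := by linarith
  have hTlt : T < 1 := by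
    have : 2 * ε / (1 + ε) < 1 := by
      rw [div_lt_one h1ε]; nlinarith
    linarith
  have h1T : (0:ℝ) < 1 - T := by linarith
  have hkey : (1 - ε) < (1 + ε) * (1 - T) := by
    have := (lt_div_iff₀ h1ε).mp hT
    nlinarith
  have hε2 : (0:ℝ) < 1 - ε ^ 2 := by nlinarith
  -- α < 1 + ε
  have hαlt : Real.sqrt ((1 - ε ^ 2) / (1 - T)) < 1 + ε := by
    rw [show (1:ℝ) + ε = Real.sqrt ((1 + ε) ^ 2) by
      rw [Real.sqrt_sq h1ε.le]]
    apply Real.sqrt_lt_sqrt (by positivity)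
    rw [div_lt_iff₀ h1T]
    nlinarith
  -- α * (1 - T) > 1 - ε
  have hprod : 1 - ε < Real.sqrt ((1 - ε ^ 2) / (1 - T)) * (1 - T) := by
    have : Real.sqrt ((1 - ε ^ 2) / (1 - T)) * (1 - T)
        = Real.sqrt ((1 - ε ^ 2) * (1 - T)) := by
      rw [show (1 - ε ^ 2) * (1 - T) = (1 - ε ^ 2) / (1 - T) * (1 - T) ^ 2 by
        field_simp]
      rw [Real.sqrt_mul (by positivity), Real.sqrt_sq h1T.le]
    rw [this]
    rw [show (1:ℝ) - ε = Real.sqrt ((1 - ε) ^ 2) by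
      rw [Real.sqrt_sq (by linarith)]]
    apply Real.sqrt_lt_sqrt (by positivity)
    nlinarith
  have hR : ε ≤ max (1 - (1 + ε) * (1 - T)) ((1 + ε) - 1) :=
    le_max_of_le_right (by linarith)
  apply lt_of_lt_of_le _ hR
  apply max_lt <;> linarith
end
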